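/- arXiv:2201.00843 — 7 statements merged into one kernel-verified Lean document; each statement's English description precedes it below -/
import Mathlib

section
/- Let (M,d) be a metric space, a < b real numbers, and γ_n : [a,b] → M a sequence of curves converging uniformly to γ : [a,b] → M. Suppose for each n there is an integrable f_n : [a,b] → [0,∞) with d(γ_n(s), γ_n(t)) ≤ ∫_s^t f_n(r) dr for all a ≤ s ≤ t ≤ b, and the family {f_n} is uniformly integrable. Then γ has finite total variation on [a,b], and the variation function v : [a,b] → ℝ, v(t) = total variation of γ on [a,t], is absolutely continuous: for every ε > 0 there is δ > 0 such that for pairwise disjoint open subintervals (a_1,b_1),…,(a_N,b_N) of [a,b] with Σ (b_i − a_i) < δ one has Σ (v(b_i) − v(a_i)) < ε. In particular γ itself is d-absolutely continuous. -/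
/-!
Along a partition of `[c, d]`, the speed bound makes the variation of `γₙ` at most `∫_c^d fₙ`.
Variation is lower semicontinuous under pointwise convergence, and so is a finite sum of
variations over several intervals; hence `∑ᵢ var(γ, [cᵢ, dᵢ]) ≤ supₙ ∫_{⋃ᵢ [cᵢ, dᵢ]} fₙ`, which
uniform integrability makes small once the total length is small. Covering `[a, b]` by finitely
many short intervals gives finite variation, additivity of the variation turns the estimate into
absolute continuity of `t ↦ var(γ, [a, t])`, and `d(γ c, γ d) ≤ var(γ, [c, d])` transfers it to `γ`.
-/

open MeasureTheory Set Filter Topology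

open scoped ENNReal

section Variation

variable {α E : Type*} [LinearOrder α]

theorem eVariationOn_le_of_edist_le [PseudoEMetricSpace E] {F : Type*} [PseudoEMetricSpace F]
    {f : α → E} {g : α → F} {s : Set α}
    (h : ∀ x ∈ s, ∀ y ∈ s, edist (f x) (f y) ≤ edist (g x) (g y)) :
    eVariationOn f s ≤ eVariationOn g s :=
  iSup_mono fun p => Finset.sum_le_sum fun _ _ => h _ (p.2.2.2 _) _ (p.2.2.2 _)

theorem eVariationOn_Icc_le_ofReal_sub [PseudoMetricSpace E] {f : α → E} {Φ : α → ℝ} {a b : α}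
    (h : ∀ x ∈ Icc a b, ∀ y ∈ Icc a b, x ≤ y → dist (f x) (f y) ≤ Φ y - Φ x) :
    eVariationOn f (Icc a b) ≤ ENNReal.ofReal (Φ b - Φ a) := by
  rcases lt_or_ge b a with hba | hab
  · simp [Icc_eq_empty_of_lt hba]
  have hΦ : MonotoneOn Φ (Icc a b) := fun x hx y hy hxy =>
    sub_nonneg.1 (dist_nonneg.trans (h x hx y hy hxy))
  calc eVariationOn f (Icc a b) ≤ eVariationOn Φ (Icc a b) := by
        refine eVariationOn_le_of_edist_le fun x hx y hy => ?_
        wlog hxy : x ≤ y generalizing x y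
        · rw [edist_comm, edist_comm (Φ x)]
          exact this y hy x hx (le_of_not_ge hxy)
        rw [edist_dist, edist_dist, Real.dist_eq, abs_sub_comm]
        exact ENNReal.ofReal_le_ofReal ((h x hx y hy hxy).trans (le_abs_self _))
    _ = ENNReal.ofReal (Φ b - Φ a) := by
        simpa using hΦ.eVariationOn_eq (left_mem_Icc.2 hab) (right_mem_Icc.2 hab)

theorem eVariationOn.sum_le_of_tendsto [PseudoEMetricSpace E] {ι κ : Type*}
    {F : ι → α → E} {f : α → E} {p : Filter ι} [p.NeBot] {S : Set α}
    (hF : ∀ x ∈ S, Tendsto (fun n => F n x) p (𝓝 (f x))) {I : Finset κ} {s : κ → Set α}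
    (hs : ∀ k ∈ I, s k ⊆ S) {L : ℝ≥0∞}
    (hL : ∀ᶠ n in p, ∑ k ∈ I, eVariationOn (F n) (s k) ≤ L) :
    ∑ k ∈ I, eVariationOn f (s k) ≤ L := by
  -- pointwise convergence on `S` is uniform convergence on the singletons of `S`
  set 𝔖 : Set (Set α) := S.image singleton
  have heval : ∀ x ∈ S, Continuous fun g : UniformOnFun α E 𝔖 => UniformOnFun.toFun 𝔖 g x :=
    fun x hx =>
      (UniformOnFun.uniformContinuous_eval_of_mem E 𝔖 (mem_singleton x) ⟨x, hx, rfl⟩).continuous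
  have hlsc : LowerSemicontinuousAt
      (fun g : UniformOnFun α E 𝔖 => ∑ k ∈ I, eVariationOn (UniformOnFun.toFun 𝔖 g) (s k))
      (UniformOnFun.ofFun 𝔖 f) :=
    lowerSemicontinuousAt_sum fun k hk _ hv =>
      eVariationOn.lowerSemicontinuous_aux (fun x hx => (heval x (hs k hk hx)).tendsto _) hv
  have htendsto :
      Tendsto (fun n => UniformOnFun.ofFun 𝔖 (F n)) p (𝓝 (UniformOnFun.ofFun 𝔖 f)) := by
    rw [UniformOnFun.tendsto_iff_tendstoUniformlyOn]
    rintro _ ⟨x, hx, rfl⟩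
    exact tendstoUniformlyOn_singleton_iff_tendsto.2 (hF x hx)
  by_contra! hlt
  obtain ⟨n, hlt_n, hle_n⟩ := ((htendsto.eventually (hlsc L hlt)).and hL).exists
  exact (hlt_n.trans_le hle_n).false

theorem BoundedVariationOn.toReal_eVariationOn_Icc_sub [PseudoEMetricSpace E] {f : α → E}
    {a c d : α} (hf : BoundedVariationOn f (Icc a d)) (hac : a ≤ c) (hcd : c ≤ d) :
    (eVariationOn f (Icc a d)).toReal - (eVariationOn f (Icc a c)).toReal =
      (eVariationOn f (Icc c d)).toReal := by
  have hsplit := eVariationOn.Icc_add_Icc f (s := univ) hac hcd (mem_univ c)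
  simp only [univ_inter] at hsplit
  rw [← hsplit, ENNReal.toReal_add (hf.mono (Icc_subset_Icc_right hcd))
    (hf.mono (Icc_subset_Icc_left hac)), add_sub_cancel_left]

end Variation

theorem boundedVariationOn_Icc_of_forall_short {E : Type*} [PseudoEMetricSpace E] {f : ℝ → E}
    {a b δ : ℝ} {C : ℝ≥0∞} (hδ : 0 < δ) (hC : C ≠ ⊤)
    (h : ∀ c d, a ≤ c → c ≤ d → d ≤ b → d - c < δ → eVariationOn f (Icc c d) ≤ C) :
    BoundedVariationOn f (Icc a b) := by
  rcases lt_or_ge b a with hba | hab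
  · simp [BoundedVariationOn, Icc_eq_empty_of_lt hba]
  obtain ⟨m, hm⟩ := exists_nat_gt ((b - a) / δ)
  have hm0 : (0 : ℝ) < m := (div_nonneg (sub_nonneg.2 hab) hδ.le).trans_lt hm
  set ℓ := (b - a) / m
  have hℓ : 0 ≤ ℓ := div_nonneg (sub_nonneg.2 hab) hm0.le
  have hℓδ : ℓ < δ := by
    rw [div_lt_iff₀ hm0]
    rwa [div_lt_iff₀ hδ, mul_comm] at hm
  set x : ℕ → ℝ := fun j => a + j * ℓ
  have hx : Monotone x := fun i j hij => by simp only [x]; gcongr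
  have hx0 : x 0 = a := by simp [x]
  have hxm : x m = b := by simp only [x, ℓ]; field_simp; ring
  rw [BoundedVariationOn, ← hx0, ← hxm, ← eVariationOn.sum' f hx]
  refine ne_top_of_le_ne_top (ENNReal.mul_ne_top (ENNReal.natCast_ne_top m) hC) ?_
  calc ∑ j ∈ Finset.range m, eVariationOn f (Icc (x j) (x (j + 1)))
      ≤ ∑ _j ∈ Finset.range m, C := by
        refine Finset.sum_le_sum fun j hj => h _ _ ?_ (hx j.le_succ) ?_ ?_
        · exact hx0 ▸ hx (Nat.zero_le j)
        · exact hxm ▸ hx (Finset.mem_range.1 hj)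
        · simp only [x]; push_cast; linarith
    _ = m * C := by simp

theorem volume_biUnion_Ioc {ι : Type*} {I : Finset ι} {c d : ι → ℝ} (hcd : ∀ i ∈ I, c i ≤ d i)
    (hdisj : (I : Set ι).PairwiseDisjoint fun i => Ioc (c i) (d i)) :
    volume (⋃ i ∈ I, Ioc (c i) (d i)) = ENNReal.ofReal (∑ i ∈ I, (d i - c i)) := by
  rw [measure_biUnion_finset hdisj fun _ _ => measurableSet_Ioc,
    ENNReal.ofReal_sum_of_nonneg fun i hi => sub_nonneg.2 (hcd i hi)]
  simp only [Real.volume_Ioc]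

theorem sum_intervalIntegral_eq_setIntegral_biUnion {E ι : Type*} [NormedAddCommGroup E]
    [NormedSpace ℝ E] {φ : ℝ → E} {I : Finset ι} {c d : ι → ℝ} (hcd : ∀ i ∈ I, c i ≤ d i)
    (hdisj : (I : Set ι).PairwiseDisjoint fun i => Ioc (c i) (d i))
    (hφ : ∀ i ∈ I, IntegrableOn φ (Ioc (c i) (d i))) :
    ∑ i ∈ I, ∫ x in c i..d i, φ x = ∫ x in ⋃ i ∈ I, Ioc (c i) (d i), φ x := by
  rw [integral_biUnion_finset I (fun _ _ => measurableSet_Ioc) hdisj hφ]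
  exact Finset.sum_congr rfl fun i hi => intervalIntegral.integral_of_le (hcd i hi)

theorem eVariationOn_Icc_le_integral {E : Type*} [PseudoMetricSpace E] {g : ℝ → E} {φ : ℝ → ℝ}
    {c d : ℝ} (hφ : IntegrableOn φ (Icc c d))
    (h : ∀ s ∈ Icc c d, ∀ t ∈ Icc c d, s ≤ t → dist (g s) (g t) ≤ ∫ r in s..t, φ r) :
    eVariationOn g (Icc c d) ≤ ENNReal.ofReal (∫ r in c..d, φ r) := by
  have hφ' : ∀ t ∈ Icc c d, IntervalIntegrable φ volume c t := fun t ht =>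
    (hφ.mono_set (uIcc_subset_Icc (left_mem_Icc.2 (ht.1.trans ht.2)) ht)).intervalIntegrable
  simpa using eVariationOn_Icc_le_ofReal_sub (Φ := fun t => ∫ r in c..t, φ r) fun s hs t ht hst =>
    (h s hs t ht hst).trans_eq
      (intervalIntegral.integral_interval_sub_left (hφ' t ht) (hφ' s hs)).symm

theorem Set.PairwiseDisjoint.Ioc_of_Ioo {ι α : Type*} [LinearOrder α] [DenselyOrdered α]
    {s : Set ι} {c d : ι → α} (h : s.PairwiseDisjoint fun i => Ioo (c i) (d i)) :
    s.PairwiseDisjoint fun i => Ioc (c i) (d i) := fun _ hi _ hj hij =>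
  Ioc_disjoint_Ioc.2 (Ioo_disjoint_Ioo.1 (h hi hj hij))

/-- The ε-δ condition of absolute continuity for an interval function `g c d` on `[a, b]`. -/
def SumsSmallOnShortIntervals (a b : ℝ) (g : ℝ → ℝ → ℝ) : Prop :=
  ∀ ε > (0:ℝ), ∃ δ > (0:ℝ), ∀ N : ℕ, ∀ c d : ℕ → ℝ,
    (∀ i < N, a ≤ c i ∧ c i ≤ d i ∧ d i ≤ b) →
    (∀ i < N, ∀ j < N, i ≠ j → Disjoint (Ioo (c i) (d i)) (Ioo (c j) (d j))) →
    (∑ i ∈ Finset.range N, (d i - c i)) < δ →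
    (∑ i ∈ Finset.range N, g (c i) (d i)) < ε

theorem SumsSmallOnShortIntervals.mono {a b : ℝ} {g h : ℝ → ℝ → ℝ}
    (hh : SumsSmallOnShortIntervals a b h)
    (hgh : ∀ c d, a ≤ c → c ≤ d → d ≤ b → g c d ≤ h c d) :
    SumsSmallOnShortIntervals a b g := fun ε hε =>
  (hh ε hε).imp fun _ ⟨hδ, H⟩ => ⟨hδ, fun N c d hcd hdisj hlen =>
    (Finset.sum_le_sum fun i hi =>
      let ⟨hac, hcd, hdb⟩ := hcd i (Finset.mem_range.1 hi)
      hgh _ _ hac hcd hdb).trans_lt (H N c d hcd hdisj hlen)⟩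

theorem sum_eVariationOn_le_of_uniformIntegrable {M ι : Type*} [PseudoMetricSpace M] {a b : ℝ}
    {γ : ℝ → M} {γn : ℕ → ℝ → M} {f : ℕ → ℝ → ℝ}
    (hconv : TendstoUniformlyOn γn γ atTop (Icc a b))
    (hf_int : ∀ n, IntegrableOn (f n) (Icc a b))
    (hspeed : ∀ n, ∀ s t : ℝ, a ≤ s → s ≤ t → t ≤ b →
      dist (γn n s) (γn n t) ≤ ∫ r in s..t, f n r)
    {ε δ : ℝ} (hδ : ∀ n, ∀ E ⊆ Icc a b, MeasurableSet E →
      volume E < ENNReal.ofReal δ → ∫ r in E, |f n r| < ε)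
    {I : Finset ι} {c d : ι → ℝ} (hcd : ∀ i ∈ I, a ≤ c i ∧ c i ≤ d i ∧ d i ≤ b)
    (hdisj : (I : Set ι).PairwiseDisjoint fun i => Ioc (c i) (d i))
    (hlen : ∑ i ∈ I, (d i - c i) < δ) :
    ∑ i ∈ I, eVariationOn γ (Icc (c i) (d i)) ≤ ENNReal.ofReal ε := by
  have hsub : ∀ i ∈ I, Icc (c i) (d i) ⊆ Icc a b := fun i hi =>
    Icc_subset_Icc (hcd i hi).1 (hcd i hi).2.2
  refine eVariationOn.sum_le_of_tendsto (fun x hx => hconv.tendsto_at hx) hsub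
    (Eventually.of_forall fun n => ?_)
  set E := ⋃ i ∈ I, Ioc (c i) (d i)
  have hE : E ⊆ Icc a b := iUnion₂_subset fun i hi => Ioc_subset_Icc_self.trans (hsub i hi)
  have hspeed_i : ∀ i ∈ I, ∀ s ∈ Icc (c i) (d i), ∀ t ∈ Icc (c i) (d i), s ≤ t →
      dist (γn n s) (γn n t) ≤ ∫ r in s..t, f n r := fun i hi s hs t ht hst =>
    hspeed n s t (hsub i hi hs).1 hst (hsub i hi ht).2
  have hvol : volume E < ENNReal.ofReal δ := by
    rw [volume_biUnion_Ioc (fun i hi => (hcd i hi).2.1) hdisj]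
    exact (ENNReal.ofReal_lt_ofReal_iff'.2
      ⟨hlen, (Finset.sum_nonneg fun i hi => sub_nonneg.2 (hcd i hi).2.1).trans_lt hlen⟩)
  calc ∑ i ∈ I, eVariationOn (γn n) (Icc (c i) (d i))
      ≤ ∑ i ∈ I, ENNReal.ofReal (∫ r in c i..d i, f n r) := Finset.sum_le_sum fun i hi =>
        eVariationOn_Icc_le_integral ((hf_int n).mono_set (hsub i hi)) (hspeed_i i hi)
    _ = ENNReal.ofReal (∑ i ∈ I, ∫ r in c i..d i, f n r) :=
        (ENNReal.ofReal_sum_of_nonneg fun i hi => dist_nonneg.trans (hspeed_i i hi _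
          (left_mem_Icc.2 (hcd i hi).2.1) _ (right_mem_Icc.2 (hcd i hi).2.1) (hcd i hi).2.1)).symm
    _ = ENNReal.ofReal (∫ r in E, f n r) := by
        rw [sum_intervalIntegral_eq_setIntegral_biUnion (fun i hi => (hcd i hi).2.1) hdisj
          fun i hi => (hf_int n).mono_set (Ioc_subset_Icc_self.trans (hsub i hi))]
    _ ≤ ENNReal.ofReal ε := ENNReal.ofReal_le_ofReal <| (le_abs_self _).trans <|
        abs_integral_le_integral_abs.trans
          (hδ n E hE (I.measurableSet_biUnion fun _ _ => measurableSet_Ioc) hvol).le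

theorem stmt_1_general {M : Type*} [MetricSpace M] (a b : ℝ)
    (γ : ℝ → M) (γn : ℕ → ℝ → M) (f : ℕ → ℝ → ℝ)
    (hconv : TendstoUniformlyOn γn γ atTop (Icc a b))
    (hf_int : ∀ n, IntegrableOn (f n) (Icc a b))
    (hspeed : ∀ n, ∀ s t : ℝ, a ≤ s → s ≤ t → t ≤ b →
      dist (γn n s) (γn n t) ≤ ∫ r in s..t, f n r)
    (hUI : ∀ ε > (0:ℝ), ∃ δ > (0:ℝ), ∀ n, ∀ E ⊆ Icc a b, MeasurableSet E →
      volume E < ENNReal.ofReal δ → ∫ r in E, |f n r| < ε) :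
    eVariationOn γ (Icc a b) < ⊤ ∧
    (∀ ε > (0:ℝ), ∃ δ > (0:ℝ), ∀ N : ℕ, ∀ c d : ℕ → ℝ,
      (∀ i < N, a ≤ c i ∧ c i ≤ d i ∧ d i ≤ b) →
      (∀ i < N, ∀ j < N, i ≠ j → Disjoint (Ioo (c i) (d i)) (Ioo (c j) (d j))) →
      (∑ i ∈ Finset.range N, (d i - c i)) < δ →
      (∑ i ∈ Finset.range N,
        ((eVariationOn γ (Icc a (d i))).toReal - (eVariationOn γ (Icc a (c i))).toReal)) < ε) ∧
    (∀ ε > (0:ℝ), ∃ δ > (0:ℝ), ∀ N : ℕ, ∀ c d : ℕ → ℝ,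
      (∀ i < N, a ≤ c i ∧ c i ≤ d i ∧ d i ≤ b) →
      (∀ i < N, ∀ j < N, i ≠ j → Disjoint (Ioo (c i) (d i)) (Ioo (c j) (d j))) →
      (∑ i ∈ Finset.range N, (d i - c i)) < δ →
      (∑ i ∈ Finset.range N, dist (γ (c i)) (γ (d i))) < ε) := by
  have hbv : BoundedVariationOn γ (Icc a b) := by
    obtain ⟨δ, hδ, hUIδ⟩ := hUI 1 one_pos
    refine boundedVariationOn_Icc_of_forall_short hδ (ENNReal.ofReal_ne_top (r := 1))
      fun c d hac hcd hdb hlen => ?_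
    simpa using sum_eVariationOn_le_of_uniformIntegrable hconv hf_int hspeed hUIδ
      (I := {()}) (c := fun _ => c) (d := fun _ => d) (by simp [*]) (by simp) (by simpa)
  have hvar : SumsSmallOnShortIntervals a b fun c d => (eVariationOn γ (Icc c d)).toReal := by
    intro ε hε
    obtain ⟨δ, hδ, hUIδ⟩ := hUI (ε / 2) (half_pos hε)
    refine ⟨δ, hδ, fun N c d hcd hdisj hlen => ?_⟩
    have hcd' : ∀ i ∈ Finset.range N, a ≤ c i ∧ c i ≤ d i ∧ d i ≤ b := fun i hi =>
      hcd i (Finset.mem_range.1 hi)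
    have hdisj' : (Finset.range N : Set ℕ).PairwiseDisjoint fun i => Ioc (c i) (d i) :=
      Set.PairwiseDisjoint.Ioc_of_Ioo fun i hi j hj hij =>
        hdisj i (by simpa using hi) j (by simpa using hj) hij
    rw [← ENNReal.toReal_sum fun i hi => hbv.mono (Icc_subset_Icc (hcd' i hi).1 (hcd' i hi).2.2)]
    exact (ENNReal.toReal_le_of_le_ofReal (half_pos hε).le
      (sum_eVariationOn_le_of_uniformIntegrable hconv hf_int hspeed hUIδ hcd' hdisj' hlen)).trans_lt
        (half_lt_self hε)
  have hincr : SumsSmallOnShortIntervals a b fun c d =>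
      (eVariationOn γ (Icc a d)).toReal - (eVariationOn γ (Icc a c)).toReal :=
    hvar.mono fun c d hac hcd hdb =>
      ((hbv.mono (Icc_subset_Icc_right hdb)).toReal_eVariationOn_Icc_sub hac hcd).le
  have hdist : SumsSmallOnShortIntervals a b fun c d => dist (γ c) (γ d) :=
    hvar.mono fun c d hac hcd hdb =>
      (hbv.mono (Icc_subset_Icc hac hdb)).dist_le (left_mem_Icc.2 hcd) (right_mem_Icc.2 hcd)
  exact ⟨hbv.lt_top, hincr, hdist⟩

/-- A uniform limit of curves with uniformly integrable speed bounds has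
finite total variation, the variation function is absolutely continuous, and the limit
curve is `d`-absolutely continuous. -/
theorem stmt_1 {M : Type*} [MetricSpace M] (a b : ℝ) (hab : a < b)
    (γ : ℝ → M) (γn : ℕ → ℝ → M) (f : ℕ → ℝ → ℝ)
    (hconv : TendstoUniformlyOn γn γ atTop (Icc a b))
    (hf_nonneg : ∀ n, ∀ t ∈ Icc a b, 0 ≤ f n t)
    (hf_int : ∀ n, IntegrableOn (f n) (Icc a b))
    (hspeed : ∀ n, ∀ s t : ℝ, a ≤ s → s ≤ t → t ≤ b →
      dist (γn n s) (γn n t) ≤ ∫ r in s..t, f n r)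
    (hUI : ∀ ε > (0:ℝ), ∃ δ > (0:ℝ), ∀ n, ∀ E ⊆ Icc a b, MeasurableSet E →
      volume E < ENNReal.ofReal δ → ∫ r in E, |f n r| < ε) :
    eVariationOn γ (Icc a b) < ⊤ ∧
    (∀ ε > (0:ℝ), ∃ δ > (0:ℝ), ∀ N : ℕ, ∀ c d : ℕ → ℝ,
      (∀ i < N, a ≤ c i ∧ c i ≤ d i ∧ d i ≤ b) →
      (∀ i < N, ∀ j < N, i ≠ j → Disjoint (Ioo (c i) (d i)) (Ioo (c j) (d j))) →
      (∑ i ∈ Finset.range N, (d i - c i)) < δ →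
      (∑ i ∈ Finset.range N,
        ((eVariationOn γ (Icc a (d i))).toReal - (eVariationOn γ (Icc a (c i))).toReal)) < ε) ∧
    (∀ ε > (0:ℝ), ∃ δ > (0:ℝ), ∀ N : ℕ, ∀ c d : ℕ → ℝ,
      (∀ i < N, a ≤ c i ∧ c i ≤ d i ∧ d i ≤ b) →
      (∀ i < N, ∀ j < N, i ≠ j → Disjoint (Ioo (c i) (d i)) (Ioo (c j) (d j))) →
      (∑ i ∈ Finset.range N, (d i - c i)) < δ →
      (∑ i ∈ Finset.range N, dist (γ (c i)) (γ (d i))) < ε) :=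
  stmt_1_general a b γ γn f hconv hf_int hspeed hUI
end

section
/- Let Λ be a set, m, and L : Λ × ℝ^m → ℝ uniformly superlinear in the fiber variable: for every K ≥ 0 there exists C(K) ∈ ℝ such that L(x,v) ≥ K‖v‖ + C(K) for all x ∈ Λ and all v ∈ ℝ^m. Fix a < b, r ≥ 0 and c ∈ ℝ, and let F be a family of triples (x, ζ, λ) where λ ∈ [0,r], x : [a,b] → Λ, ζ : [a,b] → ℝ^m is measurable with ‖ζ‖ integrable, t ↦ L(x(t), ζ(t)) is measurable, and ∫_a^b e^{λt} L(x(t), ζ(t)) dt ≤ c. Then both families of functions { t ↦ e^{λt}‖ζ(t)‖ : (x,ζ,λ) ∈ F } and { t ↦ ‖ζ(t)‖ : (x,ζ,λ) ∈ F } are uniformly integrable on [a,b]. -/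
/-!
Superlinearity gives, for every `K ≥ 0`, a constant `C_K` with `K‖v‖ + C_K ≤ L x v`. On a set
`E ⊆ [a, b]` the discounted action is at most `c` plus what the bound `L ≥ C_0` costs on the
complement of `E`, so `K ∫_E e^{λt}‖ζ‖ ≤ c + |C_0| M (b - a) + |C_K| M m(E)`, where
`M = e^{r(|a|+|b|)}` bounds the weights `e^{λt}` and their inverses. Taking `K` large and then
`m(E)` small makes the left-hand integral small; the two-sided bound on the weights transfers
this to `‖ζ‖`.
-/

open MeasureTheory Set Real

/-- The ε-δ form of uniform integrability of the family `(g i)_{i ∈ I}` on `S` (Mathlib's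
`UnifIntegrable` is phrased through `eLpNorm` of indicators instead). -/
def UniformlyIntegrableOn {ι α : Type*} [MeasurableSpace α] (g : ι → α → ℝ) (I : Set ι)
    (S : Set α) (μ : Measure α) : Prop :=
  ∀ ε > (0:ℝ), ∃ δ > (0:ℝ), ∀ i ∈ I, ∀ E ⊆ S, MeasurableSet E → μ E < ENNReal.ofReal δ →
    ∫ t in E, |g i t| ∂μ < ε

theorem abs_mul_le_of_mem_Icc {lam r a b t : ℝ} (hlam : lam ∈ Icc 0 r) (ht : t ∈ Icc a b) :
    |lam * t| ≤ r * (|a| + |b|) := by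
  rw [abs_mul, abs_of_nonneg hlam.1]
  have ht' : |t| ≤ |a| + |b| :=
    (abs_le_max_abs_abs ht.1 ht.2).trans (max_le_add_of_nonneg (abs_nonneg a) (abs_nonneg b))
  exact mul_le_mul hlam.2 ht' (abs_nonneg t) (hlam.1.trans hlam.2)

theorem exp_le_exp_and_one_le_exp_mul_exp {x R : ℝ} (hx : |x| ≤ R) :
    exp x ≤ exp R ∧ 1 ≤ exp R * exp x := by
  refine ⟨exp_le_exp.2 ((le_abs_self x).trans hx), ?_⟩
  rw [← exp_add]
  exact one_le_exp (by linarith [neg_abs_le x])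

theorem superlinear_mul_weight {ι α : Type*} {I : Set ι} {S : Set α} {w f ℓ : ι → α → ℝ}
    {M : ℝ} (hw : ∀ i ∈ I, ∀ t ∈ S, 0 ≤ w i t ∧ w i t ≤ M)
    (hsl : ∀ K ≥ (0:ℝ), ∃ C, ∀ i ∈ I, ∀ t ∈ S, K * f i t + C ≤ ℓ i t) :
    ∀ K ≥ (0:ℝ), ∃ C, ∀ i ∈ I, ∀ t ∈ S, K * (w i t * f i t) + C ≤ w i t * ℓ i t := by
  intro K hK
  obtain ⟨C, hC⟩ := hsl K hK
  refine ⟨-(|C| * M), fun i hi t ht => ?_⟩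
  obtain ⟨hw0, hwM⟩ := hw i hi t ht
  have hCw : -(|C| * M) ≤ C * w i t := by nlinarith [neg_abs_le C, abs_nonneg C]
  nlinarith [hC i hi t ht]

section

variable {α : Type*} [MeasurableSpace α] {μ : Measure α} {S E : Set α}

theorem setIntegral_le_setIntegral_add_of_const_le {h : α → ℝ} {C : ℝ} (hS : MeasurableSet S)
    (hμS : μ S ≠ ⊤) (hE : MeasurableSet E) (hES : E ⊆ S) (hh : IntegrableOn h S μ)
    (hC : ∀ t ∈ S, C ≤ h t) :
    ∫ t in E, h t ∂μ ≤ ∫ t in S, h t ∂μ + |C| * μ.real S := by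
  have hrest : C * μ.real (S \ E) ≤ ∫ t in S \ E, h t ∂μ :=
    setIntegral_ge_of_const_le_real (hS.diff hE) (measure_ne_top_of_subset sdiff_subset hμS)
      (fun t ht => hC t ht.1) (hh.mono_set sdiff_subset)
  have hmeas : -(|C| * μ.real S) ≤ C * μ.real (S \ E) := by
    have := measureReal_mono (μ := μ) (sdiff_subset : S \ E ⊆ S) hμS
    nlinarith [neg_abs_le C, abs_nonneg C, measureReal_nonneg (μ := μ) (s := S \ E)]
  rw [setIntegral_sdiff hE hh hES] at hrest
  linarith

theorem mul_setIntegral_add_le {f h : α → ℝ} {K C : ℝ} (hE : MeasurableSet E) (hμE : μ E ≠ ⊤)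
    (hK : 0 ≤ K) (hf : ∀ t ∈ E, 0 ≤ f t) (hh : IntegrableOn h E μ)
    (hfh : ∀ t ∈ E, K * f t + C ≤ h t) :
    K * ∫ t in E, f t ∂μ + C * μ.real E ≤ ∫ t in E, h t ∂μ := by
  have hmono : ∫ t in E, K * f t ∂μ ≤ ∫ t in E, (h t - C) ∂μ :=
    integral_mono_of_nonneg
      (ae_restrict_of_forall_mem hE fun t ht => mul_nonneg hK (hf t ht))
      (hh.sub (integrableOn_const hμE))
      (ae_restrict_of_forall_mem hE fun t ht => by linarith [hfh t ht])
  rw [integral_const_mul, integral_sub hh (integrableOn_const hμE), setIntegral_const,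
    smul_eq_mul] at hmono
  linarith

theorem uniformlyIntegrableOn_of_superlinear {ι : Type*} {I : Set ι} {f h : ι → α → ℝ} {c : ℝ}
    (hS : MeasurableSet S) (hμS : μ S ≠ ⊤) (hf : ∀ i ∈ I, ∀ t ∈ S, 0 ≤ f i t)
    (hh : ∀ i ∈ I, IntegrableOn (h i) S μ) (hc : ∀ i ∈ I, ∫ t in S, h i t ∂μ ≤ c)
    (hdom : ∀ K ≥ (0:ℝ), ∃ C, ∀ i ∈ I, ∀ t ∈ S, K * f i t + C ≤ h i t) :
    UniformlyIntegrableOn f I S μ := by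
  intro ε hε
  obtain ⟨C₀, hC₀⟩ := hdom 0 le_rfl
  set B := |c + |C₀| * μ.real S| + 1
  have hB : 0 < B := by positivity
  obtain ⟨C, hC⟩ := hdom (B / ε) (by positivity)
  refine ⟨1 / (|C| + 1), by positivity, fun i hi E hES hE hμE => ?_⟩
  have hsmall : |C| * μ.real E < 1 := by
    have hlt : μ.real E < 1 / (|C| + 1) := ENNReal.toReal_lt_of_lt_ofReal hμE
    rw [lt_div_iff₀ (by positivity)] at hlt
    nlinarith [abs_nonneg C, measureReal_nonneg (μ := μ) (s := E)]
  have hbound : ∫ t in E, h i t ∂μ ≤ c + |C₀| * μ.real S :=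
    (setIntegral_le_setIntegral_add_of_const_le hS hμS hE hES (hh i hi)
      fun t ht => by simpa using hC₀ i hi t ht).trans (by linarith [hc i hi])
  have hmain := mul_setIntegral_add_le hE (measure_ne_top_of_subset hES hμS) (by positivity)
    (fun t ht => hf i hi t (hES ht)) ((hh i hi).mono_set hES) fun t ht => hC i hi t (hES ht)
  rw [setIntegral_congr_fun hE fun t ht => abs_of_nonneg (hf i hi t (hES ht))]
  have hlt : B / ε * ∫ t in E, f i t ∂μ < B := by
    nlinarith [neg_abs_le C, measureReal_nonneg (μ := μ) (s := E),
      le_abs_self (c + |C₀| * μ.real S)]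
  rwa [div_mul_eq_mul_div, div_lt_iff₀ hε, mul_lt_mul_iff_right₀ hB] at hlt

end

theorem stmt_2_general {Λ : Type*} (m : ℕ) (L : Λ → EuclideanSpace ℝ (Fin m) → ℝ)
    (hsl : ∀ K ≥ (0:ℝ), ∃ C : ℝ, ∀ (x : Λ) (v : EuclideanSpace ℝ (Fin m)),
      K * ‖v‖ + C ≤ L x v)
    (a b r c : ℝ) (hab : a < b)
    (F : Set ((ℝ → Λ) × (ℝ → EuclideanSpace ℝ (Fin m)) × ℝ))
    (hF : ∀ p ∈ F, p.2.2 ∈ Icc 0 r ∧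
      Measurable p.2.1 ∧
      IntegrableOn (fun t => ‖p.2.1 t‖) (Icc a b) ∧
      IntegrableOn (fun t => exp (p.2.2 * t) * L (p.1 t) (p.2.1 t)) (Icc a b) ∧
      ∫ t in a..b, exp (p.2.2 * t) * L (p.1 t) (p.2.1 t) ≤ c) :
    (∀ ε > (0:ℝ), ∃ δ > (0:ℝ), ∀ p ∈ F, ∀ E ⊆ Icc a b, MeasurableSet E →
      volume E < ENNReal.ofReal δ →
      ∫ t in E, |exp (p.2.2 * t) * ‖p.2.1 t‖| < ε) ∧
    (∀ ε > (0:ℝ), ∃ δ > (0:ℝ), ∀ p ∈ F, ∀ E ⊆ Icc a b, MeasurableSet E →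
      volume E < ENNReal.ofReal δ →
      ∫ t in E, |‖p.2.1 t‖| < ε) := by
  set M := exp (r * (|a| + |b|))
  have hweight (p) (hp : p ∈ F) (t) (ht : t ∈ Icc a b) :
      exp (p.2.2 * t) ≤ M ∧ 1 ≤ M * exp (p.2.2 * t) :=
    exp_le_exp_and_one_le_exp_mul_exp (abs_mul_le_of_mem_Icc (hF p hp).1 ht)
  have hdom := superlinear_mul_weight (M := M) (f := fun p t => ‖p.2.1 t‖)
    (ℓ := fun p t => L (p.1 t) (p.2.1 t)) (fun p hp t ht => ⟨(exp_pos _).le, (hweight p hp t ht).1⟩)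
    fun K hK => (hsl K hK).imp fun C hC p _ t _ => hC _ _
  have hact (p) (hp : p ∈ F) : ∫ t in Icc a b, exp (p.2.2 * t) * L (p.1 t) (p.2.1 t) ≤ c := by
    rw [integral_Icc_eq_integral_Ioc, ← intervalIntegral.integral_of_le hab.le]
    exact (hF p hp).2.2.2.2
  have hint (p) (hp : p ∈ F) := (hF p hp).2.2.2.1
  refine ⟨uniformlyIntegrableOn_of_superlinear measurableSet_Icc measure_Icc_lt_top.ne
    (fun p _ t _ => by positivity) hint hact hdom,
    uniformlyIntegrableOn_of_superlinear measurableSet_Icc measure_Icc_lt_top.ne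
    (fun p _ t _ => norm_nonneg _) hint hact ?_⟩
  intro K hK
  obtain ⟨C, hC⟩ := hdom (K * M) (by positivity)
  refine ⟨C, fun p hp t ht => le_trans (add_le_add_left ?_ C) (hC p hp t ht)⟩
  calc K * ‖p.2.1 t‖ = K * 1 * ‖p.2.1 t‖ := by ring
    _ ≤ K * (M * exp (p.2.2 * t)) * ‖p.2.1 t‖ := by gcongr; exact (hweight p hp t ht).2
    _ = K * M * (exp (p.2.2 * t) * ‖p.2.1 t‖) := by ring

/-- For a uniformly superlinear Lagrangian, a family of (curve, velocity,
discount) triples with uniformly bounded discounted action has uniformly integrable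
families of (discounted) speeds. -/
theorem stmt_2 {Λ : Type*} (m : ℕ) (L : Λ → EuclideanSpace ℝ (Fin m) → ℝ)
    (hsl : ∀ K ≥ (0:ℝ), ∃ C : ℝ, ∀ (x : Λ) (v : EuclideanSpace ℝ (Fin m)),
      K * ‖v‖ + C ≤ L x v)
    (a b r c : ℝ) (hab : a < b) (hr : 0 ≤ r)
    (F : Set ((ℝ → Λ) × (ℝ → EuclideanSpace ℝ (Fin m)) × ℝ))
    (hF : ∀ p ∈ F, p.2.2 ∈ Icc 0 r ∧
      Measurable p.2.1 ∧
      IntegrableOn (fun t => ‖p.2.1 t‖) (Icc a b) ∧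
      IntegrableOn (fun t => exp (p.2.2 * t) * L (p.1 t) (p.2.1 t)) (Icc a b) ∧
      ∫ t in a..b, exp (p.2.2 * t) * L (p.1 t) (p.2.1 t) ≤ c) :
    (∀ ε > (0:ℝ), ∃ δ > (0:ℝ), ∀ p ∈ F, ∀ E ⊆ Icc a b, MeasurableSet E →
      volume E < ENNReal.ofReal δ →
      ∫ t in E, |exp (p.2.2 * t) * ‖p.2.1 t‖| < ε) ∧
    (∀ ε > (0:ℝ), ∃ δ > (0:ℝ), ∀ p ∈ F, ∀ E ⊆ Icc a b, MeasurableSet E →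
      volume E < ENNReal.ofReal δ →
      ∫ t in E, |‖p.2.1 t‖| < ε) :=
  stmt_2_general m L hsl a b r c hab F hF
end

section
/- Let U ⊆ ℝ^d be open and L : U × ℝ^m → ℝ of class C², convex in the second variable, uniformly superlinear in the second variable (for every K ≥ 0 there is C(K) ∈ ℝ with L(x,v) ≥ K‖v‖ + C(K) for all x ∈ U, v ∈ ℝ^m), and satisfying sup{ L(x,v) : x ∈ U, ‖v‖ ≤ R } < +∞ for every R > 0. Then for every compact K ⊆ U, every C > 0 and every ε > 0 there exists δ > 0 such that: whenever x ∈ K, y ∈ U with ‖x − y‖ ≤ δ, v ∈ ℝ^m with ‖v‖ ≤ C, and w ∈ ℝ^m is arbitrary, one has L(y,w) ≥ L(x,v) + ∂_v L(x,v)·(w − v) − ε, where ∂_v L(x,v) denotes the derivative of L in the second variable at (x,v). -/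
/-!
Convexity in `v` gives the tangent-plane inequality `L x v + ∂ᵥL(x,v) (w - v) ≤ L x w`, so it
remains to compare `L x w` with `L y w`. For `‖w‖ ≤ R` this is uniform continuity of `L` near the
compact set `K × B̄(0, R)`. For `‖w‖ > R` no comparison is needed: with `M` a bound for `‖∂ᵥL‖` on
`K × B̄(0, C)`, `A` a bound for `L` on `‖v‖ ≤ C` and `L y w ≥ (M + 1)‖w‖ + C₁`, the choice
`R = A + M C - C₁` makes `L y w` exceed the tangent plane outright.
-/

open Set

theorem ConvexOn.add_apply_sub_le_of_hasFDerivAt {F : Type*} [NormedAddCommGroup F]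
    [NormedSpace ℝ F] {s : Set F} {g : F → ℝ} {g' : F →L[ℝ] ℝ} (hg : ConvexOn ℝ s g)
    {v w : F} (hv : v ∈ s) (hw : w ∈ s) (hd : HasFDerivAt g g' v) :
    g v + g' (w - v) ≤ g w := by
  let ℓ : ℝ →ᵃ[ℝ] F := AffineMap.lineMap v w
  have hline : ConvexOn ℝ (ℓ ⁻¹' s) (g ∘ ℓ) := hg.comp_affineMap ℓ
  have hderiv : HasDerivAt (g ∘ ℓ) (g' (w - v)) 0 := by
    rw [← AffineMap.lineMap_apply_zero v w (k := ℝ)] at hd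
    exact hd.comp_hasDerivAt 0 AffineMap.hasDerivAt_lineMap
  have hslope := hline.le_slope_of_hasDerivAt (by simpa [ℓ]) (by simpa [ℓ]) one_pos hderiv
  simp only [slope_def_field, Function.comp_apply, AffineMap.lineMap_apply_one,
    AffineMap.lineMap_apply_zero, sub_zero, div_one, ℓ] at hslope
  linarith

theorem IsCompact.exists_forall_dist_lt_of_continuousAt {α β : Type*} [PseudoMetricSpace α]
    [PseudoMetricSpace β] {s : Set α} (hs : IsCompact s) {f : α → β}
    (hf : ∀ a ∈ s, ContinuousAt f a) {ε : ℝ} (hε : 0 < ε) :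
    ∃ δ > 0, ∀ a ∈ s, ∀ b, dist a b < δ → dist (f a) (f b) < ε := by
  obtain ⟨δ, hδ, h⟩ := Metric.mem_uniformity_dist.1
    (hs.uniformContinuousAt_of_continuousAt f hf (Metric.dist_mem_uniformity hε))
  exact ⟨δ, hδ, fun a ha b hab => h hab ha⟩

section Partial

variable {E F : Type*} [NormedAddCommGroup E] [NormedSpace ℝ E] [NormedAddCommGroup F]
  [NormedSpace ℝ F] {f : E × F → ℝ} {Ω : Set (E × F)}

theorem HasFDerivAt.comp_prodMk_right {f' : E × F →L[ℝ] ℝ} {x : E} {v : F}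
    (hf : HasFDerivAt f f' (x, v)) :
    HasFDerivAt (fun w => f (x, w)) (f'.comp (ContinuousLinearMap.inr ℝ E F)) v :=
  hf.comp v (hasFDerivAt_prodMk_right x v)

theorem exists_fderiv_comp_prodMk_right_apply_le (hΩ : IsOpen Ω) (hf : ContDiffOn ℝ 1 f Ω)
    {S : Set (E × F)} (hS : IsCompact S) (hSΩ : S ⊆ Ω) :
    ∃ M ≥ 0, ∀ p ∈ S, ∀ u, fderiv ℝ (fun w => f (p.1, w)) p.2 u ≤ M * ‖u‖ := by
  obtain ⟨M, hM⟩ := hS.exists_bound_of_continuousOn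
    ((hf.continuousOn_fderiv_of_isOpen hΩ le_rfl).mono hSΩ)
  refine ⟨max M 0, le_max_right _ _, fun p hp u => ?_⟩
  have hdiff : DifferentiableAt ℝ f (p.1, p.2) :=
    (hf.differentiableOn one_ne_zero).differentiableAt (hΩ.mem_nhds (hSΩ hp))
  rw [hdiff.hasFDerivAt.comp_prodMk_right.fderiv]
  calc (fderiv ℝ f p).comp (ContinuousLinearMap.inr ℝ E F) u
      ≤ ‖(fderiv ℝ f p).comp (ContinuousLinearMap.inr ℝ E F)‖ * ‖u‖ :=
        (Real.le_norm_self _).trans (ContinuousLinearMap.le_opNorm _ _)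
    _ ≤ ‖fderiv ℝ f p‖ * ‖u‖ := by
        gcongr
        exact (ContinuousLinearMap.opNorm_comp_le _ _).trans
          (mul_le_of_le_one_right (norm_nonneg _) (ContinuousLinearMap.norm_inr_le_one ℝ E F))
    _ ≤ max M 0 * ‖u‖ := by gcongr; exact (hM p hp).trans (le_max_left _ _)

end Partial

/-- Uniform lower bound by tangent planes (Lemma on convex superlinear
Lagrangians): near a compact set, for bounded base velocities, the Lagrangian dominates
its linearization up to ε. -/
theorem stmt_3 (d m : ℕ) (U : Set (EuclideanSpace ℝ (Fin d))) (hU : IsOpen U)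
    (L : EuclideanSpace ℝ (Fin d) → EuclideanSpace ℝ (Fin m) → ℝ)
    (hC2 : ContDiffOn ℝ 2
      (fun p : EuclideanSpace ℝ (Fin d) × EuclideanSpace ℝ (Fin m) => L p.1 p.2)
      (U ×ˢ (univ : Set (EuclideanSpace ℝ (Fin m)))))
    (hconv : ∀ x ∈ U, ConvexOn ℝ univ (L x))
    (hsl : ∀ K ≥ (0:ℝ), ∃ C : ℝ, ∀ x ∈ U, ∀ v : EuclideanSpace ℝ (Fin m),
      K * ‖v‖ + C ≤ L x v)
    (hbd : ∀ R > (0:ℝ), ∃ A : ℝ, ∀ x ∈ U, ∀ v : EuclideanSpace ℝ (Fin m),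
      ‖v‖ ≤ R → L x v ≤ A) :
    ∀ K : Set (EuclideanSpace ℝ (Fin d)), IsCompact K → K ⊆ U →
    ∀ C > (0:ℝ), ∀ ε > (0:ℝ), ∃ δ > (0:ℝ),
      ∀ x ∈ K, ∀ y ∈ U, ‖x - y‖ ≤ δ →
      ∀ v : EuclideanSpace ℝ (Fin m), ‖v‖ ≤ C →
      ∀ w : EuclideanSpace ℝ (Fin m),
        L x v + (fderiv ℝ (L x) v) (w - v) - ε ≤ L y w := by
  intro K hK hKU C hC ε hε
  have hΩ : IsOpen (U ×ˢ (univ : Set (EuclideanSpace ℝ (Fin m)))) := hU.prod isOpen_univ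
  have hC1 := hC2.of_le one_le_two
  obtain ⟨M, hM0, hM⟩ := exists_fderiv_comp_prodMk_right_apply_le hΩ hC1
    (hK.prod (isCompact_closedBall 0 C)) (prod_mono hKU (subset_univ _))
  obtain ⟨C₁, hC₁⟩ := hsl (M + 1) (by linarith)
  obtain ⟨A, hA⟩ := hbd C hC
  set R := A + M * C - C₁
  obtain ⟨δ, hδ, hnear⟩ :=
    (hK.prod (isCompact_closedBall 0 R)).exists_forall_dist_lt_of_continuousAt (fun p hp =>
      hC1.continuousOn.continuousAt (hΩ.mem_nhds (prod_mono hKU (subset_univ _) hp))) hε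
  refine ⟨δ / 2, half_pos hδ, fun x hx y hy hxy v hv w => ?_⟩
  have hxU := hKU hx
  have hLx : DifferentiableAt ℝ (L x) v :=
    ((hC1.differentiableOn one_ne_zero).differentiableAt
      (hΩ.mem_nhds ⟨hxU, mem_univ v⟩)).hasFDerivAt.comp_prodMk_right.differentiableAt
  have htan : L x v + fderiv ℝ (L x) v (w - v) ≤ L x w :=
    (hconv x hxU).add_apply_sub_le_of_hasFDerivAt (mem_univ v) (mem_univ w) hLx.hasFDerivAt
  rcases le_or_gt ‖w‖ R with hwR | hwR
  · have hdist : dist (x, w) (y, w) < δ := by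
      rw [Prod.dist_eq, dist_self, dist_eq_norm]
      exact max_lt (by linarith) hδ
    have hclose := hnear (x, w) ⟨hx, by simpa using hwR⟩ (y, w) hdist
    rw [Real.dist_eq] at hclose
    linarith [le_abs_self (L x w - L y w)]
  · have hderiv : fderiv ℝ (L x) v (w - v) ≤ M * (‖w‖ + C) :=
      (hM (x, v) ⟨hx, by simpa using hv⟩ (w - v)).trans
        (by gcongr; exact (norm_sub_le w v).trans (by linarith))
    linarith [hC₁ y hy w, hA x hxU v hv]
end

section
/- Let (M,d) be a compact metric space and h : M × M × (0,∞) → ℝ a continuous function satisfying the semigroup identity h(x,z,t+s) = inf_{y ∈ M} (h(x,y,t) + h(y,z,s)) for all x, z ∈ M and s, t > 0. Assume that for every δ > 0 there is K_δ > 0 such that for each t ∈ [δ, 1/δ] the map (x,y) ↦ h(x,y,t) is K_δ-Lipschitz with respect to the metric d(x_1,x_2) + d(y_1,y_2) on M × M. Then for every δ > 0 there is K > 0 such that for every t ≥ δ the map (x,y) ↦ h(x,y,t) is K-Lipschitz. -/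
open Set

private lemma inf_le_inf_add_aux {M : Type*} [MetricSpace M] [CompactSpace M] [Nonempty M]
    {f g : M → ℝ} (hf : Continuous f) (hg : Continuous g) {C : ℝ}
    (hC : ∀ y, f y ≤ g y + C) : (⨅ y, f y) ≤ (⨅ y, g y) + C := by
  obtain ⟨y₀, -, hy₀⟩ := isCompact_univ.exists_isMinOn univ_nonempty hg.continuousOn
  obtain ⟨z₀, -, hz₀⟩ := isCompact_univ.exists_isMinOn univ_nonempty hf.continuousOn
  have hbf : BddBelow (Set.range f) := ⟨f z₀, by rintro _ ⟨y, rfl⟩; exact hz₀ (mem_univ y)⟩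
  have hbg : BddBelow (Set.range g) := ⟨g y₀, by rintro _ ⟨y, rfl⟩; exact hy₀ (mem_univ y)⟩
  have h1 : (⨅ y, g y) = g y₀ :=
    le_antisymm (ciInf_le hbg y₀) (le_ciInf fun y => hy₀ (mem_univ y))
  calc (⨅ y, f y) ≤ f y₀ := ciInf_le hbf y₀
    _ ≤ g y₀ + C := hC y₀
    _ = (⨅ y, g y) + C := by rw [h1]

/-- If the minimal action `h` satisfies the inf-semigroup identity and
`h(·,·,t)` is uniformly Lipschitz for `t` in each compact interval `[δ, 1/δ]`, then it
is uniformly Lipschitz for all `t ≥ δ`. -/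
theorem stmt_7 {M : Type*} [MetricSpace M] [CompactSpace M] [Nonempty M]
    (h : M → M → ℝ → ℝ)
    (hcont : ContinuousOn (fun p : M × M × ℝ => h p.1 p.2.1 p.2.2)
      ((univ : Set M) ×ˢ (univ : Set M) ×ˢ Ioi (0:ℝ)))
    (hsemi : ∀ x z : M, ∀ s t : ℝ, 0 < s → 0 < t →
      h x z (t + s) = ⨅ y : M, (h x y t + h y z s))
    (hlip : ∀ δ > (0:ℝ), ∃ K > (0:ℝ), ∀ t ∈ Icc δ (1/δ), ∀ x₁ x₂ y₁ y₂ : M,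
      |h x₁ y₁ t - h x₂ y₂ t| ≤ K * (dist x₁ x₂ + dist y₁ y₂)) :
    ∀ δ > (0:ℝ), ∃ K > (0:ℝ), ∀ t ≥ δ, ∀ x₁ x₂ y₁ y₂ : M,
      |h x₁ y₁ t - h x₂ y₂ t| ≤ K * (dist x₁ x₂ + dist y₁ y₂) := by
  intro δ hδ
  set a := min δ 1 with ha
  have ha0 : 0 < a := lt_min hδ one_pos
  have ha1 : a ≤ 1 := min_le_right _ _
  have haI : a ∈ Icc a (1/a) := ⟨le_refl _, ha1.trans (one_le_one_div ha0 ha1)⟩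
  obtain ⟨K, hK0, hK⟩ := hlip a ha0
  refine ⟨K, hK0, ?_⟩
  intro t ht x₁ x₂ y₁ y₂
  have hta : a ≤ t := (min_le_left δ 1).trans ht
  -- continuity in the middle variable
  have contL : ∀ (x : M) (r : ℝ), 0 < r → Continuous fun y : M => h x y r := by
    intro x r hr
    have hmap : Continuous (fun y : M => ((x, y, r) : M × M × ℝ)) :=
      continuous_const.prodMk (continuous_id.prodMk continuous_const)
    have hco : ContinuousOn (fun y : M => h x y r) (univ : Set M) :=
      ContinuousOn.comp (s := (univ : Set M)) hcont hmap.continuousOn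
        (fun y _ => by simp [Set.mem_prod, hr])
    exact continuousOn_univ.mp hco
  have contR : ∀ (z : M) (r : ℝ), 0 < r → Continuous fun y : M => h y z r := by
    intro z r hr
    have hmap : Continuous (fun y : M => ((y, z, r) : M × M × ℝ)) :=
      continuous_id.prodMk (continuous_const.prodMk continuous_const)
    have hco : ContinuousOn (fun y : M => h y z r) (univ : Set M) :=
      ContinuousOn.comp (s := (univ : Set M)) hcont hmap.continuousOn
        (fun y _ => by simp [Set.mem_prod, hr])
    exact continuousOn_univ.mp hco
  rcases eq_or_lt_of_le hta with heq | hlt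
  · exact hK t ⟨heq.le, heq ▸ haI.2⟩ x₁ x₂ y₁ y₂
  · have hs : 0 < t - a := sub_pos.2 hlt
    -- Lipschitz in the first variable
    have step1 : ∀ z : M, |h x₁ z t - h x₂ z t| ≤ K * dist x₁ x₂ := by
      intro z
      have e : ∀ x : M, h x z t = ⨅ y, (h x y a + h y z (t - a)) := by
        intro x
        have := hsemi x z (t - a) a hs ha0
        rwa [show a + (t - a) = t by ring] at this
      have c : ∀ x : M, Continuous fun y : M => h x y a + h y z (t - a) :=
        fun x => (contL x a ha0).add (contR z _ hs)
      have b1 : (⨅ y, (h x₁ y a + h y z (t - a)))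
          ≤ (⨅ y, (h x₂ y a + h y z (t - a))) + K * dist x₁ x₂ := by
        refine inf_le_inf_add_aux (c x₁) (c x₂) fun y => ?_
        have hb := hK a haI x₁ x₂ y y
        rw [dist_self, add_zero] at hb
        have := abs_le.mp hb
        linarith [this.2]
      have b2 : (⨅ y, (h x₂ y a + h y z (t - a)))
          ≤ (⨅ y, (h x₁ y a + h y z (t - a))) + K * dist x₁ x₂ := by
        refine inf_le_inf_add_aux (c x₂) (c x₁) fun y => ?_
        have hb := hK a haI x₂ x₁ y y
        rw [dist_self, add_zero, dist_comm x₂ x₁] at hb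
        have := abs_le.mp hb
        linarith [this.2]
      rw [e x₁, e x₂, abs_sub_le_iff]
      exact ⟨by linarith, by linarith⟩
    -- Lipschitz in the second variable
    have step2 : ∀ x : M, |h x y₁ t - h x y₂ t| ≤ K * dist y₁ y₂ := by
      intro x
      have e : ∀ z : M, h x z t = ⨅ y, (h x y (t - a) + h y z a) := by
        intro z
        have := hsemi x z a (t - a) ha0 hs
        rwa [show t - a + a = t by ring] at this
      have c : ∀ z : M, Continuous fun y : M => h x y (t - a) + h y z a :=
        fun z => (contL x _ hs).add (contR z a ha0)
      have b1 : (⨅ y, (h x y (t - a) + h y y₁ a))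
          ≤ (⨅ y, (h x y (t - a) + h y y₂ a)) + K * dist y₁ y₂ := by
        refine inf_le_inf_add_aux (c y₁) (c y₂) fun y => ?_
        have hb := hK a haI y y y₁ y₂
        rw [dist_self, zero_add] at hb
        have := abs_le.mp hb
        linarith [this.2]
      have b2 : (⨅ y, (h x y (t - a) + h y y₂ a))
          ≤ (⨅ y, (h x y (t - a) + h y y₁ a)) + K * dist y₁ y₂ := by
        refine inf_le_inf_add_aux (c y₂) (c y₁) fun y => ?_
        have hb := hK a haI y y y₂ y₁
        rw [dist_self, zero_add, dist_comm y₂ y₁] at hb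
        have := abs_le.mp hb
        linarith [this.2]
      rw [e y₁, e y₂, abs_sub_le_iff]
      exact ⟨by linarith, by linarith⟩
    calc |h x₁ y₁ t - h x₂ y₂ t|
        ≤ |h x₁ y₁ t - h x₂ y₁ t| + |h x₂ y₁ t - h x₂ y₂ t| := abs_sub_le _ _ _
      _ ≤ K * dist x₁ x₂ + K * dist y₁ y₂ := add_le_add (step1 y₁) (step2 x₂)
      _ = K * (dist x₁ x₂ + dist y₁ y₂) := by ring
end

section
/- Let (M,d) be a compact metric space and h : M × M × (0,∞) → ℝ a continuous function satisfying the semigroup identity h(x,z,t+s) = inf_{y ∈ M} (h(x,y,t) + h(y,z,s)) for all x, z ∈ M and s, t > 0. Suppose there exist c ∈ ℝ and a bounded function u : M → ℝ such that u(x) = inf_{y ∈ M} (u(y) + h(y,x,t)) + c t for every x ∈ M and every t > 0. Then for every δ > 0 there exists C_δ > 0 such that |h(x,y,t) + c t| ≤ C_δ for all x, y ∈ M and all t ≥ δ. -/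
/-!
Write `u` for the weak KAM solution, bounded by `B`. Testing the infimum in
`u y = inf_z (u z + h z y t) + c t` at `z = x` gives `h x y t + c t ≥ u y - u x ≥ -2B`.
For the upper bound split `t = δ/2 + s`: the semigroup identity gives
`h x y t ≤ h x z (δ/2) + h z y s ≤ K + h z y s` for every `z`, where `K` bounds the continuous
function `h · · (δ/2)` on the compact space `M × M`; taking the infimum over `z` against the
weak KAM identity at time `s` yields `h x y t + c t ≤ K + 2B + c δ/2`.
-/

open Set

section WeakKAM

variable {M : Type*} {h : M → M → ℝ → ℝ} {u : M → ℝ} {c B : ℝ}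

lemma continuous_uncurry_of_continuousOn [TopologicalSpace M]
    (hcont : ContinuousOn (fun p : M × M × ℝ => h p.1 p.2.1 p.2.2)
      ((univ : Set M) ×ˢ (univ : Set M) ×ˢ Ioi (0:ℝ)))
    {t : ℝ} (ht : 0 < t) : Continuous fun p : M × M => h p.1 p.2 t :=
  hcont.comp_continuous (f := fun p : M × M => (p.1, p.2, t)) (by fun_prop)
    fun _ => ⟨trivial, trivial, ht⟩

lemma bddBelow_range_add_of_abs_le [TopologicalSpace M] [CompactSpace M] {f : M → ℝ}
    (hB : ∀ x, |u x| ≤ B) (hf : Continuous f) : BddBelow (range fun x => u x + f x) := by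
  obtain ⟨m, hm⟩ := (isCompact_range hf).bddBelow
  refine ⟨-B + m, ?_⟩
  rintro _ ⟨x, rfl⟩
  linarith [neg_le_of_abs_le (hB x), hm (mem_range_self x)]

lemma iInf_add_le_of_continuous [TopologicalSpace M] [CompactSpace M] {f g : M → ℝ}
    (hf : Continuous f) (hg : Continuous g) (z : M) : ⨅ w, (f w + g w) ≤ f z + g z :=
  ciInf_le (isCompact_range (hf.add hg)).bddBelow z

lemma neg_two_mul_le_of_weakKAM {x y : M} {t : ℝ} (hB : ∀ x, |u x| ≤ B)
    (hbdd : BddBelow (range fun z => u z + h z y t))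
    (hu : u y = (⨅ z : M, (u z + h z y t)) + c * t) :
    -(2 * B) ≤ h x y t + c * t := by
  have hinf : (⨅ z : M, (u z + h z y t)) ≤ u x + h x y t := ciInf_le hbdd x
  linarith [neg_le_of_abs_le (hB y), le_of_abs_le (hB x)]

lemma le_add_two_mul_of_weakKAM [Nonempty M] {x y : M} {τ s K : ℝ} (hB : ∀ x, |u x| ≤ B)
    (hK : ∀ z, h x z τ ≤ K) (hsemi : ∀ z, h x y (τ + s) ≤ h x z τ + h z y s)
    (hu : u y = (⨅ z : M, (u z + h z y s)) + c * s) :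
    h x y (τ + s) + c * (τ + s) ≤ K + 2 * B + c * τ := by
  have hinf : h x y (τ + s) - K - B ≤ ⨅ z : M, (u z + h z y s) :=
    le_ciInf fun z => by linarith [hK z, hsemi z, neg_le_of_abs_le (hB z)]
  linarith [le_of_abs_le (hB y)]

end WeakKAM

/-- If there is a bounded weak KAM solution `u` (a fixed point of the
Lax–Oleinik semigroup up to `c·t`), then `h(x,y,t) + c t` is uniformly bounded for
`t ≥ δ`. -/
theorem stmt_8 {M : Type*} [MetricSpace M] [CompactSpace M] [Nonempty M]
    (h : M → M → ℝ → ℝ)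
    (hcont : ContinuousOn (fun p : M × M × ℝ => h p.1 p.2.1 p.2.2)
      ((univ : Set M) ×ˢ (univ : Set M) ×ˢ Ioi (0:ℝ)))
    (hsemi : ∀ x z : M, ∀ s t : ℝ, 0 < s → 0 < t →
      h x z (t + s) = ⨅ y : M, (h x y t + h y z s))
    (c : ℝ) (u : M → ℝ) (hubdd : ∃ B, ∀ x, |u x| ≤ B)
    (hu : ∀ x : M, ∀ t > (0:ℝ), u x = (⨅ y : M, (u y + h y x t)) + c * t) :
    ∀ δ > (0:ℝ), ∃ C > (0:ℝ), ∀ t ≥ δ, ∀ x y : M, |h x y t + c * t| ≤ C := by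
  intro δ hδ
  obtain ⟨B, hB⟩ := hubdd
  have hcont' := fun t (ht : 0 < t) => continuous_uncurry_of_continuousOn hcont ht
  have hcontL : ∀ y t, 0 < t → Continuous fun z => h z y t :=
    fun y t ht => (hcont' t ht).comp (f := fun z => (z, y)) (by fun_prop)
  have hcontR : ∀ x t, 0 < t → Continuous fun z => h x z t :=
    fun x t ht => (hcont' t ht).comp (f := fun z => (x, z)) (by fun_prop)
  have hτ : 0 < δ / 2 := half_pos hδ
  obtain ⟨K, hK⟩ := (isCompact_range (hcont' _ hτ)).bddAbove
  refine ⟨|2 * B| + |K + 2 * B + c * (δ / 2)| + 1, by positivity, fun t ht x y => ?_⟩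
  have ht0 : 0 < t := hδ.trans_le ht
  have hs : 0 < t - δ / 2 := by linarith
  have hlower : -(2 * B) ≤ h x y t + c * t :=
    neg_two_mul_le_of_weakKAM hB (bddBelow_range_add_of_abs_le hB (hcontL y t ht0)) (hu y t ht0)
  have hupper : h x y (δ / 2 + (t - δ / 2)) + c * (δ / 2 + (t - δ / 2)) ≤
      K + 2 * B + c * (δ / 2) :=
    le_add_two_mul_of_weakKAM hB (fun z => hK ⟨(x, z), rfl⟩)
      (fun z => (hsemi x y _ _ hs hτ).trans_le <|
        iInf_add_le_of_continuous (hcontR x _ hτ) (hcontL y _ hs) z)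
      (hu y _ hs)
  rw [add_sub_cancel] at hupper
  rw [abs_le]
  constructor <;> linarith [le_abs_self (2 * B), abs_nonneg (2 * B),
    le_abs_self (K + 2 * B + c * (δ / 2)), abs_nonneg (K + 2 * B + c * (δ / 2))]
end

section
/- Let L : ℝ^d × ℝ^m → ℝ be differentiable in its second variable and let C_1 ≥ 1, C_2 ≥ 1 be constants such that ∂_v L(x,v)·v ≤ C_1 L(x,v) + C_2 for all x ∈ ℝ^d and v ∈ ℝ^m, where ∂_v L(x,v) is the derivative of L in the second variable. Then for every s ≥ 1, every x ∈ ℝ^d and every v ∈ ℝ^m, L(x, s v) ≤ s^{C_1} L(x,v) + (C_2 / C_1)(s^{C_1} − 1). -/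
/-- If `∂_v L(x,v)·v ≤ C₁ L(x,v) + C₂` with `C₁, C₂ ≥ 1`, then
`L(x, s v) ≤ s^{C₁} L(x,v) + (C₂/C₁)(s^{C₁} − 1)` for all `s ≥ 1`. -/
theorem stmt_12 (d m : ℕ)
    (L : EuclideanSpace ℝ (Fin d) → EuclideanSpace ℝ (Fin m) → ℝ)
    (hdiff : ∀ x, Differentiable ℝ (L x))
    (C₁ C₂ : ℝ) (hC₁ : 1 ≤ C₁) (hC₂ : 1 ≤ C₂)
    (hvlv : ∀ (x : EuclideanSpace ℝ (Fin d)) (v : EuclideanSpace ℝ (Fin m)),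
      (fderiv ℝ (L x) v) v ≤ C₁ * L x v + C₂) :
    ∀ s : ℝ, 1 ≤ s → ∀ (x : EuclideanSpace ℝ (Fin d)) (v : EuclideanSpace ℝ (Fin m)),
      L x (s • v) ≤ s ^ C₁ * L x v + (C₂ / C₁) * (s ^ C₁ - 1) := by
  intro s hs x v
  have hC₁0 : (0:ℝ) < C₁ := lt_of_lt_of_le one_pos hC₁
  set f : ℝ → ℝ := fun t => L x (t • v) with hf
  have hder : ∀ t : ℝ, HasDerivAt f ((fderiv ℝ (L x) (t • v)) v) t := by
    intro t
    have h1 : HasDerivAt (fun t : ℝ => t • v) v t := by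
      simpa using (hasDerivAt_id t).smul_const v
    exact ((hdiff x (t • v)).hasFDerivAt).comp_hasDerivAt t h1
  set h : ℝ → ℝ := fun t => (f t + C₂ / C₁) * t ^ (-C₁) with hh
  have hderh : ∀ t : ℝ, 0 < t →
      HasDerivAt h ((fderiv ℝ (L x) (t • v)) v * t ^ (-C₁)
        + (f t + C₂ / C₁) * (-C₁ * t ^ (-C₁ - 1))) t := by
    intro t ht
    have h1 := (hder t).add_const (C₂ / C₁)
    have h2 : HasDerivAt (fun t : ℝ => t ^ (-C₁)) (-C₁ * t ^ (-C₁ - 1)) t := by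
      simpa using Real.hasDerivAt_rpow_const (p := -C₁) (Or.inl (ne_of_gt ht))
    exact h1.mul h2
  have hanti : AntitoneOn h (Set.Icc 1 s) := by
    apply antitoneOn_of_deriv_nonpos (convex_Icc 1 s)
    · intro t ht
      have ht0 : (0:ℝ) < t := lt_of_lt_of_le one_pos ht.1
      exact (hderh t ht0).continuousAt.continuousWithinAt
    · intro t ht
      rw [interior_Icc] at ht
      have ht0 : (0:ℝ) < t := lt_trans one_pos ht.1
      exact (hderh t ht0).differentiableAt.differentiableWithinAt
    · intro t ht
      rw [interior_Icc] at ht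
      have ht0 : (0:ℝ) < t := lt_trans one_pos ht.1
      rw [(hderh t ht0).deriv]
      have key : (fderiv ℝ (L x) (t • v)) v * t ≤ C₁ * f t + C₂ := by
        have h1 := hvlv x (t • v)
        have hmap : (fderiv ℝ (L x) (t • v)) (t • v)
            = t * (fderiv ℝ (L x) (t • v)) v := by
          simp [map_smul, smul_eq_mul]
        rw [hmap] at h1
        simpa [mul_comm] using h1
      have hA : (0:ℝ) < t ^ (-C₁ - 1) := Real.rpow_pos_of_pos ht0 _
      have hsplit : t ^ (-C₁) = t * t ^ (-C₁ - 1) := by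
        rw [show -C₁ = (-C₁ - 1) + 1 by ring, Real.rpow_add ht0]
        rw [Real.rpow_one]; ring
      have hc : (f t + C₂ / C₁) * C₁ = C₁ * f t + C₂ := by
        field_simp
      rw [hsplit]
      nlinarith [mul_le_mul_of_nonneg_right key (le_of_lt hA)]
  have h1s : h s ≤ h 1 :=
    hanti (Set.left_mem_Icc.mpr hs) (Set.right_mem_Icc.mpr hs) hs
  have hh1 : h 1 = L x v + C₂ / C₁ := by
    simp [hh, hf, Real.one_rpow]
  have hspos : (0:ℝ) < s ^ C₁ := Real.rpow_pos_of_pos (lt_of_lt_of_le one_pos hs) _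
  have hsinv : s ^ (-C₁) * s ^ C₁ = 1 := by
    rw [← Real.rpow_add (lt_of_lt_of_le one_pos hs)]
    simp
  rw [hh1] at h1s
  simp only [hh] at h1s
  have hmain : f s + C₂ / C₁ ≤ (L x v + C₂ / C₁) * s ^ C₁ := by
    calc f s + C₂ / C₁ = (f s + C₂ / C₁) * s ^ (-C₁) * s ^ C₁ := by
          rw [mul_assoc, hsinv, mul_one]
      _ ≤ (L x v + C₂ / C₁) * s ^ C₁ :=
          mul_le_mul_of_nonneg_right h1s (le_of_lt hspos)
  have hfs : L x (s • v) = f s := rfl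
  rw [hfs]
  nlinarith [hmain]
end

section
/- Let (M,d) be a compact metric space and h : M × M × (0,∞) → ℝ continuous. Assume there exist constants K > 0, B > 0 and δ_0 > 0 such that for every t ≥ δ_0: |h(x,y,t)| ≤ B for all x, y, and the map (x,y) ↦ h(x,y,t) is K-Lipschitz for the metric d(x_1,x_2) + d(y_1,y_2). Let u : M → ℝ be continuous, define H_t u(x) = inf_{y ∈ M} (u(y) + h(y,x,t)) for t > 0, define P(y,x) = liminf_{t→∞} h(y,x,t), and set v(x) = inf_{z ∈ M} (u(z) + P(z,x)). Then: (a) if t_n → ∞ is a sequence such that H_{t_n} u converges pointwise to a function ψ, then ψ(x) ≥ v(x) for all x ∈ M; (b) if H_t u(x) converges as t → ∞ for every x ∈ M, then the limit function equals v. -/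
open Set Filter Topology

/-!
Both parts reduce to two inequalities between `H_t u(x)` and `u(z) + P(z, x)`. Upper bound:
`H_t u(x) ≤ u(z) + h(z, x, t)` for every `z`, and taking `liminf` gives `lim H_t u(x) ≤ v(x)`.
Lower bound: pick a minimizer `y_n` realizing `H_{t_n} u(x)` and, by compactness, a subsequence
`y_n → z`. The uniform Lipschitz bound gives `h(z, x, t_n) ≤ H_{t_n} u(x) - u(y_n) + K d(z, y_n)`,
whose right-hand side tends to `ψ(x) - u(z)`; hence `u(z) + P(z, x) ≤ ψ(x)`.
-/

section Bounded

variable {α : Type*} {l : Filter α} {f : α → ℝ} {B : ℝ}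

lemma isBoundedUnder_ge_of_eventually_abs_le (hf : ∀ᶠ a in l, |f a| ≤ B) :
    IsBoundedUnder (· ≥ ·) l f :=
  isBoundedUnder_of_eventually_ge (hf.mono fun _ ha => (abs_le.1 ha).1)

lemma isCoboundedUnder_ge_of_eventually_abs_le [l.NeBot] (hf : ∀ᶠ a in l, |f a| ≤ B) :
    IsCoboundedUnder (· ≥ ·) l f :=
  isCoboundedUnder_ge_of_eventually_le l (hf.mono fun _ ha => (abs_le.1 ha).2)

lemma neg_le_liminf_of_eventually_abs_le [l.NeBot] (hf : ∀ᶠ a in l, |f a| ≤ B) :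
    -B ≤ liminf f l :=
  le_liminf_of_le (isCoboundedUnder_ge_of_eventually_abs_le hf)
    (hf.mono fun _ ha => (abs_le.1 ha).1)

end Bounded

section LaxOleinik

variable {M : Type*} [MetricSpace M]

noncomputable def laxOleinik (h : M → M → ℝ → ℝ) (u : M → ℝ) (t : ℝ) (x : M) : ℝ :=
  ⨅ y, u y + h y x t

variable {h : M → M → ℝ → ℝ} {u : M → ℝ} {x : M} {t B K δ₀ : ℝ}

lemma continuous_of_abs_sub_le (hlip : ∀ y₁ y₂, |h y₁ x t - h y₂ x t| ≤ K * dist y₁ y₂) :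
    Continuous fun y => h y x t :=
  (LipschitzWith.of_dist_le' fun y₁ y₂ => by simpa only [Real.dist_eq] using hlip y₁ y₂).continuous

variable [CompactSpace M]

lemma bddBelow_range_add_of_le {g : M → ℝ} {c : ℝ} (hu : Continuous u) (hg : ∀ y, c ≤ g y) :
    BddBelow (range fun y => u y + g y) := by
  obtain ⟨m, hm⟩ := (isCompact_range hu).bddBelow
  exact ⟨m + c, by rintro _ ⟨y, rfl⟩; exact add_le_add (hm (mem_range_self y)) (hg y)⟩

lemma laxOleinik_le (hu : Continuous u) (hlow : ∀ y, -B ≤ h y x t) (z : M) :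
    laxOleinik h u t x ≤ u z + h z x t :=
  ciInf_le (bddBelow_range_add_of_le hu hlow) z

lemma exists_laxOleinik_eq (hu : Continuous u) (hh : Continuous fun y => h y x t) :
    ∃ y, laxOleinik h u t x = u y + h y x t := by
  have : Nonempty M := ⟨x⟩
  obtain ⟨y, hy⟩ := (isCompact_range (hu.add hh)).sInf_mem (range_nonempty _)
  exact ⟨y, hy.symm⟩

lemma exists_laxOleinik_minimizer
    (hu : Continuous u) (hlip : ∀ t ≥ δ₀, ∀ y₁ y₂, |h y₁ x t - h y₂ x t| ≤ K * dist y₁ y₂) :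
    ∃ y : ℝ → M, ∀ t ≥ δ₀, laxOleinik h u t x = u (y t) + h (y t) x t := by
  have hmin : ∀ t, ∃ y, δ₀ ≤ t → laxOleinik h u t x = u y + h y x t := fun t => by
    by_cases ht : δ₀ ≤ t
    · obtain ⟨y, hy⟩ := exists_laxOleinik_eq hu (continuous_of_abs_sub_le (hlip t ht))
      exact ⟨y, fun _ => hy⟩
    · exact ⟨x, fun ht' => absurd ht' ht⟩
  choose y hy using hmin
  exact ⟨y, hy⟩

lemma le_add_liminf_of_tendsto_laxOleinik (hu : Continuous u)
    (hbound : ∀ t ≥ δ₀, ∀ y, |h y x t| ≤ B) {l : ℝ}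
    (hl : Tendsto (fun t => laxOleinik h u t x) atTop (𝓝 l)) (z : M) :
    l ≤ u z + liminf (fun t => h z x t) atTop := by
  have hδ : ∀ᶠ t in atTop, δ₀ ≤ t := eventually_ge_atTop δ₀
  have hle : ∀ᶠ t in atTop, laxOleinik h u t x - u z ≤ h z x t := hδ.mono fun t ht => by
    linarith [laxOleinik_le hu (fun y => (abs_le.1 (hbound t ht y)).1) z]
  have := liminf_le_liminf hle (hl.sub_const (u z)).isBoundedUnder_ge
    (isCoboundedUnder_ge_of_eventually_abs_le (hδ.mono fun t ht => hbound t ht z))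
  rw [(hl.sub_const (u z)).liminf_eq] at this
  linarith

lemma exists_add_liminf_le_of_tendsto_laxOleinik (hu : Continuous u)
    (hbound : ∀ t ≥ δ₀, ∀ y, |h y x t| ≤ B)
    (hlip : ∀ t ≥ δ₀, ∀ y₁ y₂, |h y₁ x t - h y₂ x t| ≤ K * dist y₁ y₂)
    {tn : ℕ → ℝ} {ψ : ℝ} (htn : Tendsto tn atTop atTop)
    (hψ : Tendsto (fun n => laxOleinik h u (tn n) x) atTop (𝓝 ψ)) :
    ∃ z, u z + liminf (fun t => h z x t) atTop ≤ ψ := by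
  obtain ⟨y, hy⟩ := exists_laxOleinik_minimizer hu hlip
  obtain ⟨z, φ, hφ, hyz⟩ := CompactSpace.tendsto_subseq (y ∘ tn)
  set s := tn ∘ φ
  have hs : Tendsto s atTop atTop := htn.comp hφ.tendsto_atTop
  have hδ : ∀ᶠ k in atTop, δ₀ ≤ s k := hs.eventually_ge_atTop δ₀
  have hupper : Tendsto (fun k => laxOleinik h u (s k) x - u (y (s k)) + K * dist (y (s k)) z)
      atTop (𝓝 (ψ - u z)) := by
    simpa [s] using ((hψ.comp hφ.tendsto_atTop).sub ((hu.tendsto z).comp hyz)).add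
      (tendsto_const_nhds.mul (tendsto_iff_dist_tendsto_zero.1 hyz))
  have hle : ∀ᶠ k in atTop,
      h z x (s k) ≤ laxOleinik h u (s k) x - u (y (s k)) + K * dist (y (s k)) z :=
    hδ.mono fun k hk => by
      have := (abs_le.1 (hlip _ hk z (y (s k)))).2
      rw [hy _ hk, dist_comm]
      linarith
  have hbdd : ∀ᶠ t in atTop, |h z x t| ≤ B :=
    (eventually_ge_atTop δ₀).mono fun t ht => hbound t ht z
  have hsub : liminf (fun k => h z x (s k)) atTop ≤ ψ - u z := by
    rw [← hupper.liminf_eq]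
    exact liminf_le_liminf hle (isBoundedUnder_ge_of_eventually_abs_le (hs.eventually hbdd))
      hupper.isBoundedUnder_le.isCoboundedUnder_ge
  have hcomp : liminf (fun t => h z x t) atTop ≤ liminf (fun k => h z x (s k)) atTop :=
    hs.liminf_le_liminf_comp
      (isCoboundedUnder_ge_of_eventually_abs_le (eventually_map.2 (hs.eventually hbdd)))
      (isBoundedUnder_ge_of_eventually_abs_le hbdd)
  exact ⟨z, by linarith⟩

end LaxOleinik

theorem stmt_15_general {M : Type*} [MetricSpace M] [CompactSpace M]
    (h : M → M → ℝ → ℝ)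
    (K B δ₀ : ℝ)
    (hbound : ∀ t ≥ δ₀, ∀ x y : M, |h x y t| ≤ B)
    (hlip : ∀ t ≥ δ₀, ∀ x₁ x₂ y₁ y₂ : M,
      |h x₁ y₁ t - h x₂ y₂ t| ≤ K * (dist x₁ x₂ + dist y₁ y₂))
    (u : M → ℝ) (hu : Continuous u)
    (P : M → M → ℝ) (hP : ∀ y x : M, P y x = liminf (fun t : ℝ => h y x t) atTop)
    (v : M → ℝ) (hv : ∀ x : M, v x = ⨅ z : M, (u z + P z x)) :
    (∀ (tn : ℕ → ℝ) (ψ : M → ℝ), Tendsto tn atTop atTop →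
      (∀ x : M, Tendsto (fun n => ⨅ y : M, (u y + h y x (tn n))) atTop (nhds (ψ x))) →
      ∀ x : M, v x ≤ ψ x) ∧
    ((∀ x : M, ∃ l : ℝ,
        Tendsto (fun t : ℝ => ⨅ y : M, (u y + h y x t)) atTop (nhds l)) →
      ∀ x : M, Tendsto (fun t : ℝ => ⨅ y : M, (u y + h y x t)) atTop (nhds (v x))) := by
  have hlipx : ∀ x, ∀ t ≥ δ₀, ∀ y₁ y₂ : M, |h y₁ x t - h y₂ x t| ≤ K * dist y₁ y₂ :=
    fun x t ht y₁ y₂ => by simpa using hlip t ht y₁ y₂ x x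
  have hP_ge : ∀ z x, -B ≤ P z x := fun z x => hP z x ▸
    neg_le_liminf_of_eventually_abs_le ((eventually_ge_atTop δ₀).mono fun t ht => hbound t ht z x)
  have hv_le : ∀ x z, v x ≤ u z + P z x := fun x z => by
    rw [hv]
    exact ciInf_le (bddBelow_range_add_of_le hu fun z => hP_ge z x) z
  have hA : ∀ (tn : ℕ → ℝ) (ψx : ℝ) (x : M), Tendsto tn atTop atTop →
      Tendsto (fun n => laxOleinik h u (tn n) x) atTop (𝓝 ψx) → v x ≤ ψx := by
    intro tn ψx x htn hψ
    obtain ⟨z, hz⟩ := exists_add_liminf_le_of_tendsto_laxOleinik hu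
      (fun t ht y => hbound t ht y x) (hlipx x) htn hψ
    exact (hv_le x z).trans (by rwa [hP])
  refine ⟨fun tn ψ htn hψ x => hA tn (ψ x) x htn (hψ x), fun hconv x => ?_⟩
  obtain ⟨l, hl⟩ := hconv x
  have : Nonempty M := ⟨x⟩
  have hvl : v x = l := by
    refine le_antisymm
      (hA _ l x tendsto_natCast_atTop_atTop (hl.comp tendsto_natCast_atTop_atTop)) ?_
    rw [hv]
    exact le_ciInf fun z => hP z x ▸ le_add_liminf_of_tendsto_laxOleinik hu
      (fun t ht y => hbound t ht y x) hl z
  rwa [hvl]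

/-- Any pointwise limit of the Lax–Oleinik semigroup `H_t u` along some
sequence of times dominates `v(x) = inf_z (u(z) + P(z,x))`; if `H_t u` converges
pointwise as `t → ∞`, the limit is exactly `v`. -/
theorem stmt_15 {M : Type*} [MetricSpace M] [CompactSpace M] [Nonempty M]
    (h : M → M → ℝ → ℝ)
    (hcont : ContinuousOn (fun p : M × M × ℝ => h p.1 p.2.1 p.2.2)
      ((univ : Set M) ×ˢ (univ : Set M) ×ˢ Ioi (0:ℝ)))
    (K B δ₀ : ℝ) (hK : 0 < K) (hB : 0 < B) (hδ₀ : 0 < δ₀)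
    (hbound : ∀ t ≥ δ₀, ∀ x y : M, |h x y t| ≤ B)
    (hlip : ∀ t ≥ δ₀, ∀ x₁ x₂ y₁ y₂ : M,
      |h x₁ y₁ t - h x₂ y₂ t| ≤ K * (dist x₁ x₂ + dist y₁ y₂))
    (u : M → ℝ) (hu : Continuous u)
    (P : M → M → ℝ) (hP : ∀ y x : M, P y x = liminf (fun t : ℝ => h y x t) atTop)
    (v : M → ℝ) (hv : ∀ x : M, v x = ⨅ z : M, (u z + P z x)) :
    (∀ (tn : ℕ → ℝ) (ψ : M → ℝ), Tendsto tn atTop atTop →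
      (∀ x : M, Tendsto (fun n => ⨅ y : M, (u y + h y x (tn n))) atTop (nhds (ψ x))) →
      ∀ x : M, v x ≤ ψ x) ∧
    ((∀ x : M, ∃ l : ℝ,
        Tendsto (fun t : ℝ => ⨅ y : M, (u y + h y x t)) atTop (nhds l)) →
      ∀ x : M, Tendsto (fun t : ℝ => ⨅ y : M, (u y + h y x t)) atTop (nhds (v x))) :=
  stmt_15_general h K B δ₀ hbound hlip u hu P hP v hv
end
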